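/- Let A be a Banach algebra such that A* has the right-weak*-weak convergence property with respect to A and A** has the left-weak*-weak convergence property with respect to A. If the second dual A** (with the first Arens product) is weakly amenable, then A is weakly amenable. -/

import Mathlib

open ContinuousLinearMap NormedSpace Filter Topology Metric

noncomputable section

namespace NormedSpace

/-- The topological dual of a seminormed space `E` (as in the older Mathlib). -/
def Dual (𝕜 : Type*) [NontriviallyNormedField 𝕜] (E : Type*) [SeminormedAddCommGroup E]
    [NormedSpace 𝕜 E] : Type _ :=
  E →L[𝕜] 𝕜

variable {𝕜 : Type*} [NontriviallyNormedField 𝕜] {E : Type*} [NormedAddCommGroup E] [NormedSpace 𝕜 E]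

instance : NormedAddCommGroup (Dual 𝕜 E) := ContinuousLinearMap.toNormedAddCommGroup

instance : NormedSpace 𝕜 (Dual 𝕜 E) := ContinuousLinearMap.toNormedSpace

instance : FunLike (Dual 𝕜 E) E 𝕜 := ContinuousLinearMap.funLike

instance : ContinuousLinearMapClass (Dual 𝕜 E) 𝕜 E 𝕜 := ContinuousLinearMap.continuousSemilinearMapClass

end NormedSpace

namespace Arens

section Bilinear

variable {X Y Z : Type*} [NormedAddCommGroup X] [NormedSpace ℂ X]
  [NormedAddCommGroup Y] [NormedSpace ℂ Y] [NormedAddCommGroup Z] [NormedSpace ℂ Z]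

/-- The Arens adjoint `m*` of a bounded bilinear map `m : X × Y → Z`,
`⟨m*(z',x), y⟩ = ⟨z', m(x,y)⟩`. -/
def adj (f : X →L[ℂ] Y →L[ℂ] Z) : Dual ℂ Z →L[ℂ] X →L[ℂ] Dual ℂ Y :=
  ((ContinuousLinearMap.compL ℂ X (Y →L[ℂ] Z) (Y →L[ℂ] ℂ)).flip f).comp
    (ContinuousLinearMap.compL ℂ Y Z ℂ)

@[simp] lemma adj_apply (f : X →L[ℂ] Y →L[ℂ] Z) (z' : Dual ℂ Z) (x : X) (y : Y) :
    adj f z' x y = z' (f x y) := rfl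

/-- The Arens triple-adjoint extension `m*** : X** × Y** → Z**` of a bounded
bilinear map `m : X × Y → Z`. -/
def ext3 (f : X →L[ℂ] Y →L[ℂ] Z) :
    Dual ℂ (Dual ℂ X) →L[ℂ] Dual ℂ (Dual ℂ Y) →L[ℂ] Dual ℂ (Dual ℂ Z) :=
  adj (adj (adj f))

/-- Weak-star convergence of a net `(a i)` of `X` (canonically embedded in `X**`)
to an element `F` of the bidual `X**`. -/
def WStarTendsto {ι : Type*} (a : ι → X) (l : Filter ι) (F : Dual ℂ (Dual ℂ X)) : Prop :=
  ∀ x' : Dual ℂ X, Tendsto (fun i => x' (a i)) l (𝓝 (F x'))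

end Bilinear

section Algebra

variable (A : Type*) [NonUnitalNormedRing A] [NormedSpace ℂ A]
  [IsScalarTower ℂ A A] [SMulCommClass ℂ A A]

/-- The multiplication of a (non-unital) Banach algebra as a bounded bilinear map. -/
abbrev mulCLM : A →L[ℂ] A →L[ℂ] A := ContinuousLinearMap.mul ℂ A

/-- The first Arens product on the bidual `A**`. -/
def fstArens (F G : Dual ℂ (Dual ℂ A)) : Dual ℂ (Dual ℂ A) := ext3 (mulCLM A) F G

/-- The second Arens product on the bidual `A**` (`m^{t***t}`). -/
def sndArens (F G : Dual ℂ (Dual ℂ A)) : Dual ℂ (Dual ℂ A) :=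
  ext3 ((mulCLM A).flip) G F

/-- A Banach algebra is Arens regular when its two Arens products coincide. -/
def ArensRegular : Prop := ∀ F G : Dual ℂ (Dual ℂ A), fstArens A F G = sndArens A F G

end Algebra

section ModuleWC

universe u
variable {A : Type u} {B : Type*} [NonUnitalNormedRing A] [NormedSpace ℂ A]
  [NormedAddCommGroup B] [NormedSpace ℂ B]

/-- For a left Banach `A`-module action `πl` on `B`, the element `b' a ∈ B*`,
`⟨b' a, b⟩ = ⟨b', a • b⟩`. -/
def dualSmulL (πl : A →L[ℂ] B →L[ℂ] B) (b' : Dual ℂ B) (a : A) : Dual ℂ B := adj πl b' a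

/-- The Arens extension `b' a'' ∈ B***`, `⟨b'', b' a''⟩ = ⟨π_ℓ***(a'', b''), b'⟩`. -/
def dualSmulLStar (πl : A →L[ℂ] B →L[ℂ] B) (b' : Dual ℂ B) (F : Dual ℂ (Dual ℂ A)) :
    Dual ℂ (Dual ℂ (Dual ℂ B)) :=
  (inclusionInDoubleDual ℂ (Dual ℂ B) b').comp (ext3 πl F)

/-- `b' ∈ B*` has the left-weak*-weak convergence property (`Lw*wc`) with respect to `A`:
for every net `(a_α) ⊆ A` with `a_α → a''` weak* in `A**`, the net `b' a_α` converges
weakly to `b' a''` in `B*`. -/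
def LWStarWC (πl : A →L[ℂ] B →L[ℂ] B) (b' : Dual ℂ B) : Prop :=
  ∀ (ι : Type u) (l : Filter ι) (a : ι → A) (F : Dual ℂ (Dual ℂ A)),
    WStarTendsto a l F →
    ∀ b'' : Dual ℂ (Dual ℂ B),
      Tendsto (fun i => b'' (dualSmulL πl b' (a i))) l (𝓝 (dualSmulLStar πl b' F b''))

/-- For a right Banach `A`-module action `πr` on `B`, the element `a b' ∈ B*`,
`⟨a b', b⟩ = ⟨b', b • a⟩`. -/
def dualSmulR (πr : B →L[ℂ] A →L[ℂ] B) (a : A) (b' : Dual ℂ B) : Dual ℂ B :=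
  adj πr.flip b' a

/-- The Arens extension `a'' b' ∈ B***`, `⟨b'', a'' b'⟩ = ⟨π_r^{t***}(a'', b''), b'⟩`. -/
def dualSmulRStar (πr : B →L[ℂ] A →L[ℂ] B) (F : Dual ℂ (Dual ℂ A)) (b' : Dual ℂ B) :
    Dual ℂ (Dual ℂ (Dual ℂ B)) :=
  (inclusionInDoubleDual ℂ (Dual ℂ B) b').comp (ext3 πr.flip F)

/-- `b' ∈ B*` has the right-weak*-weak convergence property (`Rw*wc`) with respect to `A`. -/
def RWStarWC (πr : B →L[ℂ] A →L[ℂ] B) (b' : Dual ℂ B) : Prop :=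
  ∀ (ι : Type u) (l : Filter ι) (a : ι → A) (F : Dual ℂ (Dual ℂ A)),
    WStarTendsto a l F →
    ∀ b'' : Dual ℂ (Dual ℂ B),
      Tendsto (fun i => b'' (dualSmulR πr (a i) b')) l (𝓝 (dualSmulRStar πr F b' b''))

end ModuleWC

section AlgebraWC

variable (A : Type u) [NonUnitalNormedRing A] [NormedSpace ℂ A]
  [IsScalarTower ℂ A A] [SMulCommClass ℂ A A]

/-- The product `a'' a' ∈ A*` (first step of the first Arens product):
`⟨a'' a', a⟩ = ⟨a'', a' a⟩` where `⟨a' a, b⟩ = ⟨a', a b⟩`. -/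
def biSmul (F : Dual ℂ (Dual ℂ A)) (a' : Dual ℂ A) : Dual ℂ A :=
  F.comp (adj (mulCLM A) a')

/-- The element `a · a' ∈ A*`, `⟨a a', b⟩ = ⟨a', b a⟩`. -/
def leftMulDual (a : A) (a' : Dual ℂ A) : Dual ℂ A := a'.comp ((mulCLM A).flip a)

/-- `A*` has the `Rw*wc`-property with respect to `A`: for every `a' ∈ A*` and every net
`(a_α) ⊆ A` with `a_α → a''` weak* in `A**`, the net `a_α a'` (`⟨a_α a', b⟩ = ⟨a', b a_α⟩`)
converges weakly in `A*` to `a'' a'`. -/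
def RWStarWCDualProp : Prop :=
  ∀ (a' : Dual ℂ A) (ι : Type u) (l : Filter ι) (a : ι → A) (F : Dual ℂ (Dual ℂ A)),
    WStarTendsto a l F →
    ∀ x'' : Dual ℂ (Dual ℂ A),
      Tendsto (fun i => x'' (leftMulDual A (a i) a')) l (𝓝 (x'' (biSmul A F a')))

/-- `A*` has the `Lw*wc`-property with respect to `A`. -/
def LWStarWCDualProp : Prop := ∀ a' : Dual ℂ A, LWStarWC (mulCLM A) a'

/-- `A**` has the `Lw*wc`-property with respect to `A`: for every `x'' ∈ A**` and every net
`(a_α) ⊆ A` with `a_α → a''` weak* in `A**`, the net `x'' a_α` converges weakly in `A**`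
to `x'' a''`. -/
def LWStarWCBidualProp : Prop :=
  ∀ (x'' : Dual ℂ (Dual ℂ A)) (ι : Type u) (l : Filter ι) (a : ι → A) (F : Dual ℂ (Dual ℂ A)),
    WStarTendsto a l F →
    ∀ Φ : Dual ℂ (Dual ℂ (Dual ℂ A)),
      Tendsto (fun i => Φ (fstArens A x'' (inclusionInDoubleDual ℂ A (a i)))) l
        (𝓝 (Φ (fstArens A x'' F)))

/-- `D : A → A*` is a derivation: `D(ab) = a·D(b) + D(a)·b`, where
`(a·f)(x) = f(x a)` and `(f·b)(x) = f(b x)`. -/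
def IsDerivation (D : A →L[ℂ] Dual ℂ A) : Prop :=
  ∀ a b : A, D (a * b) = (D b).comp ((mulCLM A).flip a) + (D a).comp (mulCLM A b)

/-- `A` is weakly amenable: every bounded derivation `D : A → A*` is inner. -/
def WeaklyAmenable : Prop :=
  ∀ D : A →L[ℂ] Dual ℂ A, IsDerivation A D →
    ∃ f : Dual ℂ A, ∀ a : A, D a = f.comp ((mulCLM A).flip a) - f.comp (mulCLM A a)

/-- The left action of `A**` (with the first Arens product) on `A***`:
`(F·Φ)(G) = Φ(G F)`. -/
def ddLeftAct (F : Dual ℂ (Dual ℂ A)) (Φ : Dual ℂ (Dual ℂ (Dual ℂ A))) :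
    Dual ℂ (Dual ℂ (Dual ℂ A)) :=
  Φ.comp ((ext3 (mulCLM A)).flip F)

/-- The right action of `A**` (with the first Arens product) on `A***`:
`(Φ·F)(G) = Φ(F G)`. -/
def ddRightAct (F : Dual ℂ (Dual ℂ A)) (Φ : Dual ℂ (Dual ℂ (Dual ℂ A))) :
    Dual ℂ (Dual ℂ (Dual ℂ A)) :=
  Φ.comp (ext3 (mulCLM A) F)

/-- A bounded map `D : A** → A***` is a derivation for the first Arens product. -/
def IsDerivationDD (D : Dual ℂ (Dual ℂ A) →L[ℂ] Dual ℂ (Dual ℂ (Dual ℂ A))) : Prop :=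
  ∀ F G : Dual ℂ (Dual ℂ A),
    D (fstArens A F G) = ddLeftAct A F (D G) + ddRightAct A G (D F)

/-- `A**` (with the first Arens product) is weakly amenable. -/
def WeaklyAmenableDD : Prop :=
  ∀ D : Dual ℂ (Dual ℂ A) →L[ℂ] Dual ℂ (Dual ℂ (Dual ℂ A)), IsDerivationDD A D →
    ∃ Φ : Dual ℂ (Dual ℂ (Dual ℂ A)), ∀ F, D F = ddLeftAct A F Φ - ddRightAct A F Φ

/-- `A*** A** ⊆ A*`: each product `x''' x''` (`⟨x''' x'', a''⟩ = ⟨x''', x'' a''⟩`)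
lies in the canonical image of `A*` in `A***`. -/
def TripleDualMulIntoDual : Prop :=
  ∀ (Φ : Dual ℂ (Dual ℂ (Dual ℂ A))) (F : Dual ℂ (Dual ℂ A)),
    ∃ a' : Dual ℂ A, ddRightAct A F Φ = inclusionInDoubleDual ℂ (Dual ℂ A) a'

end AlgebraWC

section DualMap

variable {X Y : Type*} [NormedAddCommGroup X] [NormedSpace ℂ X]
  [NormedAddCommGroup Y] [NormedSpace ℂ Y]

/-- The Banach-space adjoint of a bounded operator. -/
def dualMap' (T : X →L[ℂ] Y) : Dual ℂ Y →L[ℂ] Dual ℂ X :=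
  (ContinuousLinearMap.compL ℂ X Y ℂ).flip T

/-- The second adjoint `D'' : A** → A***` of `D : A → A*`. -/
def secondAdjoint {A : Type*} [NonUnitalNormedRing A] [NormedSpace ℂ A]
    (D : A →L[ℂ] Dual ℂ A) :
    Dual ℂ (Dual ℂ A) →L[ℂ] Dual ℂ (Dual ℂ (Dual ℂ A)) :=
  dualMap' (dualMap' D)

end DualMap

section Biregular

variable (A B : Type*) [NonUnitalNormedRing A] [NormedSpace ℂ A]
  [NonUnitalNormedRing B] [NormedSpace ℂ B]

/-- A bounded bilinear form `m : A × B → ℂ` is biregular (Ülger): for any sequences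
`(a_i), (aa2_j)` in the unit ball of `A` and `(b_i), (bb_j)` in the unit ball of `B`,
the two iterated limits of `m(a_i aa2_j, b_i bb_j)` coincide whenever both exist. -/
def Biregular (m : A →L[ℂ] B →L[ℂ] ℂ) : Prop :=
  ∀ (a aa2 : ℕ → A) (b bb : ℕ → B),
    (∀ i, ‖a i‖ ≤ 1) → (∀ j, ‖aa2 j‖ ≤ 1) → (∀ i, ‖b i‖ ≤ 1) → (∀ j, ‖bb j‖ ≤ 1) →
    ∀ (g h : ℕ → ℂ) (L L' : ℂ),
      (∀ i, Tendsto (fun j => m (a i * aa2 j) (b i * bb j)) atTop (𝓝 (g i))) →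
      Tendsto g atTop (𝓝 L) →
      (∀ j, Tendsto (fun i => m (a i * aa2 j) (b i * bb j)) atTop (𝓝 (h j))) →
      Tendsto h atTop (𝓝 L') → L = L'

/-- Arens regularity of the projective tensor product `A ⊗̂ B`.  By Ülger's theorem
(`[22, Theorem 3.4]`), `A ⊗̂ B` is Arens regular if and only if every bounded bilinear
form `m : A × B → ℂ` is biregular; since the dual of `A ⊗̂ B` is exactly the space of
bounded bilinear forms on `A × B`, we take this equivalent characterization as the
formalization of Arens regularity of `A ⊗̂ B`. -/
def ProjArensRegular : Prop := ∀ m : A →L[ℂ] B →L[ℂ] ℂ, Biregular A B m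

end Biregular

end Arens

/-! The second adjoint `D''` of a derivation `D : A → A*` is a derivation of `(A**, □)`:
on `A` this is the derivation identity of `D`; in the second variable every term is
weak*-continuous, and in the first variable the only term that is not,
`F ↦ D''(G)(H □ F)`, is handled by the `Lw*wc`-property of `A**`, approximating `F` by a net
from `A` (Goldstine, in the exact finite-interpolation form of Helly's lemma).
Weak amenability of `A**` then makes `D''` inner, and restricting the implementing
functional to `A` makes `D` inner. -/

namespace Arens

section Interpolation

variable {X : Type*} [NormedAddCommGroup X] [NormedSpace ℂ X]

theorem exists_forall_mem_apply_eq (F : Dual ℂ (Dual ℂ X)) (S : Finset (Dual ℂ X)) :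
    ∃ a : X, ∀ x' ∈ S, x' a = F x' := by
  classical
  let T : X →ₗ[ℂ] S → ℂ := LinearMap.pi fun s => ((s : Dual ℂ X) : X →ₗ[ℂ] ℂ)
  let t : S → ℂ := fun s => F s
  by_contra! h
  have ht : t ∉ LinearMap.range T := by
    rintro ⟨a, ha⟩
    obtain ⟨x', hx', hne⟩ := h a
    exact hne (congrFun ha ⟨x', hx'⟩)
  obtain ⟨f, hft, hfT⟩ := Submodule.exists_dual_map_eq_bot_of_notMem ht inferInstance
  -- `f` annihilates the range of `T`, so `x' := ∑ f(eₛ) s` vanishes on `X`, yet `F x' = f t`.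
  let x' : Dual ℂ X := ∑ s : S, f (fun j => if s = j then 1 else 0) • (s : Dual ℂ X)
  have hx' : ∀ y : Dual ℂ (Dual ℂ X), y x' = f fun s => y s := by
    intro y
    rw [LinearMap.pi_apply_eq_sum_univ f]
    simp only [x', map_sum, map_smul, smul_eq_mul]
    exact Finset.sum_congr rfl fun s _ => mul_comm _ _
  have hx'_zero : x' = 0 := by
    refine ContinuousLinearMap.ext fun a => ?_
    have hfTa : f (T a) = 0 := by
      have := Submodule.mem_map_of_mem (f := f) (LinearMap.mem_range_self T a)
      rwa [hfT, Submodule.mem_bot] at this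
    exact (hx' (inclusionInDoubleDual ℂ X a)).trans hfTa
  exact hft (by rw [← hx' F, hx'_zero, map_zero])

theorem exists_wStarTendsto (F : Dual ℂ (Dual ℂ X)) : ∃ a : Finset (Dual ℂ X) → X, WStarTendsto a atTop F := by
  choose a ha using exists_forall_mem_apply_eq F
  refine ⟨a, fun x' => tendsto_const_nhds.congr' ?_⟩
  filter_upwards [eventually_ge_atTop {x'}] with S hS
  exact (ha S x' (hS (Finset.mem_singleton_self x'))).symm

end Interpolation

section SecondAdjoint

variable {A : Type*} [NonUnitalNormedRing A] [NormedSpace ℂ A]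
  [IsScalarTower ℂ A A] [SMulCommClass ℂ A A]

local notation "J" => inclusionInDoubleDual ℂ A

variable {D : A →L[ℂ] Dual ℂ A}

theorem IsDerivation.secondAdjoint_fstArens_inclusion_left (hD : IsDerivation A D) (a : A)
    (G : Dual ℂ (Dual ℂ A)) :
    secondAdjoint D (fstArens A (J a) G)
      = ddLeftAct A (J a) (secondAdjoint D G) + ddRightAct A G (secondAdjoint D (J a)) := by
  refine ContinuousLinearMap.ext fun H => ?_
  have h_in_dual : (dualMap' D H).comp (mulCLM A a)
      = H.comp ((dualMap' ((mulCLM A).flip a)).comp D)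
        + H.comp ((ContinuousLinearMap.compL ℂ A A ℂ (D a)).comp (mulCLM A)) :=
    ContinuousLinearMap.ext fun b => (congrArg H (hD a b)).trans (map_add H _ _)
  exact (congrArg G h_in_dual).trans (map_add G _ _)

theorem IsDerivation.isDerivationDD_secondAdjoint (hD : IsDerivation A D)
    (hL : LWStarWCBidualProp A) : IsDerivationDD A (secondAdjoint D) := by
  intro F G
  obtain ⟨a, ha⟩ := exists_wStarTendsto F
  refine ContinuousLinearMap.ext fun H => tendsto_nhds_unique (ha _) ?_
  have hrhs := (hL H _ atTop a F ha (secondAdjoint D G)).add (ha (dualMap' D (fstArens A G H)))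
  refine hrhs.congr fun S => ?_
  exact (congrArg (· H) (hD.secondAdjoint_fstArens_inclusion_left (a S) G)).symm

end SecondAdjoint

end Arens

theorem weaklyAmenable_of_bidual_weaklyAmenable_general
    {A : Type*} [NonUnitalNormedRing A] [NormedSpace ℂ A]
    [IsScalarTower ℂ A A] [SMulCommClass ℂ A A]
    (hL : Arens.LWStarWCBidualProp A)
    (hwa : Arens.WeaklyAmenableDD A) : Arens.WeaklyAmenable A := by
  intro D hD
  obtain ⟨Φ, hΦ⟩ := hwa _ (hD.isDerivationDD_secondAdjoint hL)
  refine ⟨Φ.comp (inclusionInDoubleDual ℂ A), fun a => ?_⟩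
  -- `D''` extends `D` and `□` extends the product of `A`, both definitionally.
  exact ContinuousLinearMap.ext fun b =>
    DFunLike.congr_fun (hΦ (inclusionInDoubleDual ℂ A a)) (inclusionInDoubleDual ℂ A b)

/-- **Theorem 3-4.** If `A*` has the `Rw*wc`-property and `A**` has the `Lw*wc`-property
with respect to `A`, and `A**` (with the first Arens product) is weakly amenable, then
`A` is weakly amenable. -/
theorem weaklyAmenable_of_bidual_weaklyAmenable
    {A : Type*} [NonUnitalNormedRing A] [NormedSpace ℂ A]
    [IsScalarTower ℂ A A] [SMulCommClass ℂ A A] [CompleteSpace A]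
    (hR : Arens.RWStarWCDualProp A) (hL : Arens.LWStarWCBidualProp A)
    (hwa : Arens.WeaklyAmenableDD A) : Arens.WeaklyAmenable A :=
  weaklyAmenable_of_bidual_weaklyAmenable_general hL hwa
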